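/- For |q| < 1, |q/a| < 1, $a \neq 0$, and every positive integer N: ${}_2\phi_1(a, b; bq/a; q, -q/a) = \frac{(bq; q^2)_N (bq^2/a^2; q^2)_N}{(bq/a; q)_{2N}} \cdot {}_2\phi_1(a, b q^{2N}; b q^{2N+1}/a; q, -q/a)$. -/

import Mathlib

open Finset

noncomputable def qPoch (a q : ℂ) (n : ℕ) : ℂ := ∏ j ∈ Finset.range n, (1 - a * q ^ j)

noncomputable def qPochInf (a q : ℂ) : ℂ := ∏' j : ℕ, (1 - a * q ^ j)

noncomputable def phi (a b c q x : ℂ) : ℂ :=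
  ∑' i : ℕ, qPoch a q i * qPoch b q i / (qPoch q q i * qPoch c q i) * x ^ i

/-!
Let `t_i(B)` be the `i`-th term of `₂φ₁(a, B; Bq/a; q, -q/a)` and
`C(B) = (1 - Bq)(1 - Bq²/a²) / ((1 - Bq/a)(1 - Bq²/a))`. There is an explicit sequence `u` with
`u_0 = 0` and `t_i(B) - C(B) t_i(Bq²) = u_i - u_{i+1}`; since all three series converge
(ratio test, the term ratios tend to `-q/a`), summing telescopes to `φ(B) = C(B) φ(Bq²)`.
Applying this at `B = b, bq², …, bq^{2N-2}` multiplies the factors `C` into the quotient of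
`q`-Pochhammer symbols.
-/

section QPochhammer

@[simp]
lemma qPoch_zero (a q : ℂ) : qPoch a q 0 = 1 := by simp [qPoch]

lemma qPoch_succ (a q : ℂ) (n : ℕ) : qPoch a q (n + 1) = qPoch a q n * (1 - a * q ^ n) :=
  prod_range_succ _ n

lemma qPoch_succ' (a q : ℂ) (n : ℕ) : qPoch a q (n + 1) = (1 - a) * qPoch (a * q) q n := by
  simp only [qPoch, prod_range_succ', pow_zero, mul_one, pow_succ, mul_assoc, mul_comm]

lemma qPoch_ne_zero {a q : ℂ} (h : ∀ j : ℕ, a * q ^ j ≠ 1) (n : ℕ) : qPoch a q n ≠ 0 :=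
  prod_ne_zero_iff.2 fun j _ => sub_ne_zero.2 (h j).symm

lemma qPoch_self_ne_zero {q : ℂ} (hq : ‖q‖ < 1) (n : ℕ) : qPoch q q n ≠ 0 := by
  refine qPoch_ne_zero (fun j h => ?_) n
  have : ‖q * q ^ j‖ < 1 := by
    rw [← pow_succ', norm_pow]
    exact pow_lt_one₀ (norm_nonneg q) hq (Nat.succ_ne_zero j)
  simp [h] at this

end QPochhammer

section Series

lemma summable_of_succ_eq_smul_of_tendsto {𝕜 E : Type*} [NormedField 𝕜]
    [NormedAddCommGroup E] [NormedSpace 𝕜 E] [CompleteSpace E] {f : ℕ → E} {g : ℕ → 𝕜} {x : 𝕜}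
    (hx : ‖x‖ < 1)
    (hf : ∀ i, f (i + 1) = g i • f i) (hg : Filter.Tendsto g Filter.atTop (nhds x)) :
    Summable f := by
  have hr : (1 + ‖x‖) / 2 < 1 := by linarith
  refine summable_of_ratio_norm_eventually_le hr ?_
  filter_upwards [hg.norm.eventually_lt_const (by linarith : ‖x‖ < (1 + ‖x‖) / 2)] with i hi
  rw [hf i, norm_smul]
  exact mul_le_mul_of_nonneg_right hi.le (norm_nonneg _)

lemma tsum_sub_add_one_eq {G : Type*} [AddCommGroup G] [TopologicalSpace G]
    [IsTopologicalAddGroup G] [T2Space G] {u : ℕ → G} (hu : Summable u) :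
    ∑' i, (u i - u (i + 1)) = u 0 := by
  rw [hu.tsum_sub ((summable_nat_add_iff 1).2 hu), hu.tsum_eq_zero_add, add_sub_cancel_right]

noncomputable def phiTerm (a b c q x : ℂ) (i : ℕ) : ℂ :=
  qPoch a q i * qPoch b q i / (qPoch q q i * qPoch c q i) * x ^ i

lemma phi_eq_tsum_phiTerm (a b c q x : ℂ) : phi a b c q x = ∑' i, phiTerm a b c q x i := rfl

lemma phiTerm_succ (a b c q x : ℂ) (i : ℕ) :
    phiTerm a b c q x (i + 1) =
      (1 - a * q ^ i) * (1 - b * q ^ i) * x / ((1 - q * q ^ i) * (1 - c * q ^ i)) *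
        phiTerm a b c q x i := by
  simp only [phiTerm, qPoch_succ, pow_succ, div_eq_mul_inv, mul_inv]
  ring

lemma summable_phiTerm {q x : ℂ} (a b c : ℂ) (hq : ‖q‖ < 1) (hx : ‖x‖ < 1) :
    Summable (phiTerm a b c q x) := by
  refine summable_of_succ_eq_smul_of_tendsto hx (fun i => phiTerm_succ a b c q x i) ?_
  have hF : ContinuousAt
      (fun y : ℂ => (1 - a * y) * (1 - b * y) * x / ((1 - q * y) * (1 - c * y))) 0 := by
    fun_prop (disch := norm_num)
  simpa [Function.comp_def] using hF.tendsto.comp (tendsto_pow_atTop_nhds_zero_of_norm_lt_one hq)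

end Series

section Contiguous

variable {a q B : ℂ}

noncomputable def contiguousCoeff (a q B : ℂ) : ℂ :=
  (1 - B * q) * (1 - B * q ^ 2 / a ^ 2) / ((1 - B * q / a) * (1 - B * q ^ 2 / a))

noncomputable def contiguousCert (a q B : ℂ) : ℕ → ℂ
  | 0 => 0
  | i + 1 => -(B * (1 - q / a)) * (qPoch a q (i + 1) * qPoch (B * q) q i * (-(q / a)) ^ (i + 1)) /
      (qPoch q q i * qPoch (B * q / a) q (i + 2))

lemma contiguousCert_succ (a q B : ℂ) (i : ℕ) :
    contiguousCert a q B (i + 1) =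
      -(B * (1 - q / a)) * (1 - a) * -(q / a) / ((1 - B * q / a) * (1 - B * q / a * q)) *
        phiTerm (a * q) (B * q) (B * q / a * q * q) q (-(q / a)) i := by
  rw [contiguousCert, phiTerm, qPoch_succ' a, qPoch_succ' (B * q / a), qPoch_succ' (B * q / a * q)]
  simp only [pow_succ, div_eq_mul_inv, mul_inv]
  ring

lemma summable_contiguousCert (hq : ‖q‖ < 1) (hqa : ‖q / a‖ < 1) :
    Summable (contiguousCert a q B) := by
  refine (summable_nat_add_iff 1).1 ?_
  simp only [contiguousCert_succ]
  exact (summable_phiTerm _ _ _ hq (by rwa [norm_neg])).mul_left _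

-- The factor `1 - Bq` of `C` is absorbed into `(Bq; q)_{i+1}`, so nothing is divided by it.
lemma contiguousCoeff_mul_phiTerm (a q B x : ℂ) (i : ℕ) :
    contiguousCoeff a q B * phiTerm a (B * q ^ 2) (B * q ^ 2 * q / a) q x i =
      (1 - B * q ^ 2 / a ^ 2) * (qPoch a q i * qPoch (B * q) q (i + 1) * x ^ i) /
        (qPoch q q i * qPoch (B * q / a) q (i + 2)) := by
  rw [contiguousCoeff, phiTerm, qPoch_succ' (B * q), qPoch_succ' (B * q / a),
    qPoch_succ' (B * q / a * q), show B * q * q = B * q ^ 2 by ring,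
    show B * q / a * q * q = B * q ^ 2 * q / a by ring, show B * q / a * q = B * q ^ 2 / a by ring]
  simp only [div_eq_mul_inv, mul_inv]
  ring

lemma phiTerm_sub_contiguousCoeff_mul (hq : ‖q‖ < 1) (ha : a ≠ 0)
    (hc : ∀ j : ℕ, B * q / a * q ^ j ≠ 1) (i : ℕ) :
    phiTerm a B (B * q / a) q (-(q / a)) i -
        contiguousCoeff a q B * phiTerm a (B * q ^ 2) (B * q ^ 2 * q / a) q (-(q / a)) i =
      contiguousCert a q B i - contiguousCert a q B (i + 1) := by
  rw [contiguousCoeff_mul_phiTerm]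
  have hc' : ∀ j : ℕ, 1 - B * q / a * q ^ j ≠ 0 := fun j h => hc j (sub_eq_zero.1 h).symm
  cases i with
  | zero =>
    have hD : (1 - B * q / a) * (1 - B * q / a * q) ≠ 0 :=
      mul_ne_zero (by simpa using hc' 0) (by simpa using hc' 1)
    simp only [phiTerm, contiguousCert, qPoch_succ, qPoch_zero, pow_zero, pow_one, mul_one,
      one_mul, zero_add, div_one]
    rw [one_sub_div hD, zero_sub, ← neg_div, div_left_inj' hD]
    field_simp
    ring
  | succ i =>
    have hf1 := hc' (i + 1)
    have hf2 := hc' (i + 2)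
    have hW := qPoch_ne_zero hc (i + 1)
    obtain ⟨hQ, hQ1⟩ := mul_ne_zero_iff.1 (qPoch_succ q q i ▸ qPoch_self_ne_zero hq (i + 1))
    simp only [phiTerm, contiguousCert, qPoch_succ' B, qPoch_succ (B * q), qPoch_succ q q,
      qPoch_succ (B * q / a) q (i + 1), qPoch_succ (B * q / a) q (i + 2), qPoch_succ a q (i + 1)]
    rw [div_mul_eq_mul_div, div_sub_div _ _ (by simp [*]) (by simp [*]),
      div_sub_div _ _ (by simp [*]) (by simp [*]), div_eq_div_iff (by simp [*]) (by simp [*])]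
    simp only [pow_succ]
    generalize (-(q / a)) ^ i = s
    field_simp
    ring

lemma phi_eq_contiguousCoeff_mul (hq : ‖q‖ < 1) (ha : a ≠ 0) (hqa : ‖q / a‖ < 1)
    (hc : ∀ j : ℕ, B * q / a * q ^ j ≠ 1) :
    phi a B (B * q / a) q (-(q / a)) =
      contiguousCoeff a q B * phi a (B * q ^ 2) (B * q ^ 2 * q / a) q (-(q / a)) := by
  have hx : ‖-(q / a)‖ < 1 := by rwa [norm_neg]
  have hT := summable_phiTerm a B (B * q / a) hq hx
  have hS := summable_phiTerm a (B * q ^ 2) (B * q ^ 2 * q / a) hq hx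
  rw [phi_eq_tsum_phiTerm, phi_eq_tsum_phiTerm, ← hS.tsum_mul_left, ← sub_eq_zero,
    ← hT.tsum_sub (hS.mul_left _)]
  simp only [phiTerm_sub_contiguousCoeff_mul hq ha hc]
  rw [tsum_sub_add_one_eq (summable_contiguousCert hq hqa), contiguousCert]

end Contiguous

lemma qPoch_quotient_succ (a b q : ℂ) (N : ℕ) :
    qPoch (b * q) (q ^ 2) (N + 1) * qPoch (b * q ^ 2 / a ^ 2) (q ^ 2) (N + 1) /
        qPoch (b * q / a) q (2 * (N + 1)) =
      qPoch (b * q) (q ^ 2) N * qPoch (b * q ^ 2 / a ^ 2) (q ^ 2) N / qPoch (b * q / a) q (2 * N) *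
        contiguousCoeff a q (b * q ^ (2 * N)) := by
  rw [show 2 * (N + 1) = 2 * N + 1 + 1 by ring, qPoch_succ, qPoch_succ, qPoch_succ, qPoch_succ,
    contiguousCoeff]
  simp only [div_eq_mul_inv, mul_inv]
  ring

theorem stmt_13_general (q a b : ℂ) (hq : ‖q‖ < 1) (ha : a ≠ 0) (hqa : ‖q / a‖ < 1)
    (hc : ∀ j : ℕ, (b * q / a) * q ^ j ≠ 1) (N : ℕ) :
    phi a b (b * q / a) q (-(q / a)) =
      qPoch (b * q) (q ^ 2) N * qPoch (b * q ^ 2 / a ^ 2) (q ^ 2) N /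
          qPoch (b * q / a) q (2 * N) *
        phi a (b * q ^ (2 * N)) (b * q ^ (2 * N + 1) / a) q (-(q / a)) := by
  induction N with
  | zero => simp
  | succ N ih =>
    have hcN : ∀ j : ℕ, b * q ^ (2 * N) * q / a * q ^ j ≠ 1 :=
      fun j h => hc (2 * N + j) (by rw [← h]; ring)
    rw [ih, show b * q ^ (2 * N + 1) / a = b * q ^ (2 * N) * q / a by ring,
      phi_eq_contiguousCoeff_mul hq ha hqa hcN,
      show b * q ^ (2 * N) * q ^ 2 = b * q ^ (2 * (N + 1)) by ring,
      show b * q ^ (2 * (N + 1)) * q / a = b * q ^ (2 * (N + 1) + 1) / a by ring,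
      qPoch_quotient_succ]
    exact (mul_assoc _ _ _).symm

theorem stmt_13 (q a b : ℂ) (hq : ‖q‖ < 1) (ha : a ≠ 0) (hqa : ‖q / a‖ < 1)
    (hc : ∀ j : ℕ, (b * q / a) * q ^ j ≠ 1) (N : ℕ) (hN : 0 < N) :
    phi a b (b * q / a) q (-(q / a)) =
      qPoch (b * q) (q ^ 2) N * qPoch (b * q ^ 2 / a ^ 2) (q ^ 2) N /
          qPoch (b * q / a) q (2 * N) *
        phi a (b * q ^ (2 * N)) (b * q ^ (2 * N + 1) / a) q (-(q / a)) :=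
  stmt_13_general q a b hq ha hqa hc N
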